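/- Let w = u·a·v·b·Sym(u)·b be an element of F_n, where u·a is the principal prefix of w, and suppose v ≠ λ. Then v can be decomposed as v = v₁·a·v₂, where v₁ and v₂ are palindromes (v₂ possibly empty), and there exists t ≥ 0 such that u = v₂·(a·v)^t. -/

import Mathlib

/-- The two-letter alphabet {a, b}. -/
inductive Letter : Type
  | a : Letter
  | b : Letter
deriving DecidableEq, BEq, Repr

/-- Words over the alphabet {a, b}. -/
abbrev Word := List Letter

/-- δ(w) = |w|_a − |w|_b. -/
def delta (w : Word) : ℤ := (w.count Letter.a : ℤ) - (w.count Letter.b : ℤ)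

/-- A Dyck word: δ(w) = 0 and δ(p) ≥ 0 for every prefix p of w. -/
def IsDyck (w : Word) : Prop := delta w = 0 ∧ ∀ p : Word, p <+: w → 0 ≤ delta p

/-- Membership in D_n: w = d·b with d a Dyck word of length 2n. -/
def InD (n : ℕ) (w : Word) : Prop :=
  ∃ d : Word, IsDyck d ∧ d.length = 2 * n ∧ w = d ++ [Letter.b]

/-- Exchanging the letters a and b. -/
def Letter.flip : Letter → Letter
  | .a => .b
  | .b => .a

/-- The complement w̄ of a word w. -/
def comp (w : Word) : Word := w.map Letter.flip

/-- Sym(w): the complement of the mirror (reversal) of w. -/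
def sym (w : Word) : Word := comp w.reverse

/-- A palindrome: a word equal to its mirror. -/
def Palindrome (w : Word) : Prop := w.reverse = w

/-- w' is a conjugate of w: w = u·v and w' = v·u. -/
def Conj (w w' : Word) : Prop := ∃ u v : Word, w = u ++ v ∧ w' = v ++ u

/-- u is the principal prefix of w: the shortest prefix of w with δ(u) maximal. -/
def IsPrincipalPrefix (u w : Word) : Prop :=
  u <+: w ∧ (∀ p : Word, p <+: w → delta p ≤ delta u) ∧
    (∀ p : Word, p <+: w → delta p = delta u → u.length ≤ p.length)

/-- The graph of the map γ: writing w = u·v·b with u the principal prefix of w,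
    γ(w) = v̄·b·ū. -/
def GammaRel (w w' : Word) : Prop :=
  ∃ u v : Word, IsPrincipalPrefix u w ∧ w = u ++ v ++ [Letter.b] ∧
    w' = comp v ++ [Letter.b] ++ comp u

/-- F_n: the fixed points of γ in D_n. -/
def InF (n : ℕ) (w : Word) : Prop := InD n w ∧ GammaRel w w

/-- F_γ = ⋃_{n ≥ 1} F_n. -/
def InFgamma (w : Word) : Prop := ∃ n : ℕ, 1 ≤ n ∧ InF n w

/-- x^y: concatenation of the word x with itself y times. -/
def wpow (x : Word) : ℕ → Word
  | 0 => []
  | k + 1 => x ++ wpow x k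

/-!
The fixed-point equation γ(w) = w, cut at length |u·a·v·b|, says that u is a palindrome and
u·(a·v) = (v̄·a)·u. By the Lyndon–Schützenberger conjugacy lemma, a·v = q·p and v̄·a = p·q with
u = p·(q·p)^t and q ≠ λ, and p is a palindrome because u is. Complementing p·q = v̄·a shows that
the complement of b·p·q is q·p·b. A word y with y a prefix of the complement of Q·y (Q ≠ λ) is
determined by its length, since each of its letters is the complement of the letter |Q| places
earlier in Q·y; as q̃ satisfies the same relation for Q = b·p, q is a palindrome, so q = a·v₁·a
with v₁ a palindrome (q = a would force v̄ = v).
-/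

namespace Letter

@[simp]
theorem flip_flip (c : Letter) : c.flip.flip = c := by cases c <;> rfl

@[simp]
theorem flip_a : Letter.a.flip = Letter.b := rfl

@[simp]
theorem flip_b : Letter.b.flip = Letter.a := rfl

theorem flip_ne_self (c : Letter) : c.flip ≠ c := by cases c <;> decide

end Letter

@[simp]
theorem comp_nil : comp [] = [] := rfl

@[simp]
theorem comp_cons (c : Letter) (w : Word) : comp (c :: w) = c.flip :: comp w := rfl

@[simp]
theorem comp_append (x y : Word) : comp (x ++ y) = comp x ++ comp y := List.map_append

@[simp]
theorem comp_comp (w : Word) : comp (comp w) = w := by simp [comp, Function.comp_def]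

theorem comp_reverse (w : Word) : comp w.reverse = (comp w).reverse := List.map_reverse ..

theorem comp_injective : Function.Injective comp :=
  Function.LeftInverse.injective comp_comp

theorem eq_nil_of_comp_eq_self {w : Word} (h : comp w = w) : w = [] := by
  cases w with
  | nil => rfl
  | cons c w => exact absurd (List.cons.inj h).1 c.flip_ne_self

theorem wpow_append_append_shift (p q : Word) (t : ℕ) :
    wpow (p ++ q) t ++ p = p ++ wpow (q ++ p) t := by
  induction t with
  | zero => simp [wpow]
  | succ t ih => simp [wpow, ih]

theorem IsPrincipalPrefix.unique {u₁ u₂ w : Word} (h₁ : IsPrincipalPrefix u₁ w)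
    (h₂ : IsPrincipalPrefix u₂ w) : u₁ = u₂ := by
  obtain ⟨hp₁, hmax₁, hmin₁⟩ := h₁
  obtain ⟨hp₂, hmax₂, hmin₂⟩ := h₂
  have hd : delta u₁ = delta u₂ := le_antisymm (hmax₂ _ hp₁) (hmax₁ _ hp₂)
  have hl : u₁.length = u₂.length := le_antisymm (hmin₁ _ hp₂ hd.symm) (hmin₂ _ hp₁ hd)
  exact (List.prefix_of_prefix_length_le hp₁ hp₂ hl.le).eq_of_length hl

theorem exists_conj_factorization {u x y : Word} (hy : y ≠ []) (h : u ++ x = y ++ u) :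
    ∃ p q : Word, ∃ t : ℕ, q ≠ [] ∧ y = p ++ q ∧ x = q ++ p ∧ u = p ++ wpow (q ++ p) t := by
  rcases lt_or_ge u.length y.length with hlt | hle
  · obtain ⟨s, rfl⟩ : u <+: y :=
      List.prefix_of_prefix_length_le (h ▸ List.prefix_append u x) (List.prefix_append y u) hlt.le
    refine ⟨u, s, 0, ?_, rfl, by simpa using h, by simp [wpow]⟩
    rintro rfl
    simp at hlt
  · obtain ⟨u₁, rfl⟩ : y <+: u :=
      List.prefix_of_prefix_length_le (h.symm ▸ List.prefix_append y u) (List.prefix_append u x) hle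
    have h₁ : u₁ ++ x = y ++ u₁ := by simpa using h
    have : u₁.length < (y ++ u₁).length := by
      simpa [Nat.pos_iff_ne_zero] using hy
    obtain ⟨p, q, t, hq, rfl, rfl, rfl⟩ := exists_conj_factorization hy h₁
    exact ⟨p, q, t + 1, hq, rfl, rfl, by simp [wpow]⟩
termination_by u.length

theorem eq_of_prefix_comp_append {Q y y' : Word} (hQ : Q ≠ []) (hlen : y.length = y'.length)
    (hy : y <+: comp (Q ++ y)) (hy' : y' <+: comp (Q ++ y')) : y = y' := by
  have antiperiodic : ∀ {z : Word}, z <+: comp (Q ++ z) → ∀ i (hi : i < z.length),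
      z[i] = ((Q ++ z)[i]'(by simp; omega)).flip := by
    intro z hz i hi
    rw [hz.getElem hi]
    exact List.getElem_map ..
  have hQ_pos : 0 < Q.length := List.length_pos_iff.mpr hQ
  apply List.ext_getElem hlen
  intro i hi hi'
  induction i using Nat.strong_induction_on with
  | _ i ih =>
    rw [antiperiodic hy i hi, antiperiodic hy' i hi', List.getElem_append, List.getElem_append]
    split_ifs with hiQ
    · rfl
    · rw [ih (i - Q.length) (by omega)]

theorem palindrome_of_comp_append_eq {Q y : Word} (hQ : Q ≠ [])
    (h : comp (Q ++ y) = y ++ Q.reverse) : Palindrome y := by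
  have h' : comp (Q ++ y.reverse) = y.reverse ++ Q.reverse := by
    have h_rev : comp (y.reverse ++ Q.reverse) = Q ++ y.reverse := by
      simpa [comp_reverse] using congrArg List.reverse h
    rw [← h_rev, comp_comp]
  exact eq_of_prefix_comp_append hQ List.length_reverse (h' ▸ List.prefix_append _ _)
    (h ▸ List.prefix_append _ _)

theorem palindrome_and_conj_of_gammaRel_self {w u v : Word} (hγ : GammaRel w w)
    (hdec : w = u ++ [Letter.a] ++ v ++ [Letter.b] ++ sym u ++ [Letter.b])
    (hpp : IsPrincipalPrefix (u ++ [Letter.a]) w) :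
    Palindrome u ∧ u ++ ([Letter.a] ++ v) = (comp v ++ [Letter.a]) ++ u := by
  obtain ⟨u₀, v₀, hpp₀, hw₁, hw₂⟩ := hγ
  obtain rfl := hpp₀.unique hpp
  obtain rfl : v₀ = v ++ [Letter.b] ++ sym u := by
    rw [hdec] at hw₁
    exact List.append_cancel_right (by simpa using hw₁.symm :
      v₀ ++ [Letter.b] = (v ++ [Letter.b] ++ sym u) ++ [Letter.b])
  rw [hdec] at hw₂
  obtain ⟨hhead, htail⟩ := List.append_inj' (by simpa [sym, comp_reverse] using hw₂ :
    (u ++ [Letter.a] ++ v ++ [Letter.b]) ++ ((comp u).reverse ++ [Letter.b]) =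
      (comp v ++ [Letter.a] ++ u.reverse ++ [Letter.b]) ++ (comp u ++ [Letter.b])) (by simp)
  have hu : Palindrome u :=
    comp_injective (by simpa [comp_reverse] using htail)
  refine ⟨hu, ?_⟩
  rw [hu] at hhead
  simpa using List.append_cancel_right hhead

theorem Palindrome.of_append_wpow {p q : Word} {t : ℕ} (h : Palindrome (p ++ wpow (q ++ p) t)) :
    Palindrome p := by
  have h' : p.reverse ++ (wpow (p ++ q) t).reverse = p ++ wpow (q ++ p) t := by
    rw [← List.reverse_append, wpow_append_append_shift]
    exact h
  exact (List.append_inj h' List.length_reverse).1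

theorem Palindrome.exists_eq_cons_append {c : Letter} {l : Word} (h : Palindrome (c :: l))
    (hl : l ≠ []) : ∃ m, Palindrome m ∧ l = m ++ [c] := by
  obtain ⟨m, d, rfl⟩ := (List.eq_nil_or_concat' l).resolve_left hl
  have h' : d :: (m.reverse ++ [c]) = c :: (m ++ [d]) := by simpa [Palindrome] using h
  obtain ⟨rfl, hm⟩ := List.cons.inj h'
  exact ⟨m, (List.append_inj hm List.length_reverse).1, rfl⟩

/-- Proposition (iv): for w = u·a·v·b·Sym(u)·b ∈ F_n with u·a its principal
    prefix and v ≠ λ, v decomposes as v = v₁·a·v₂ with v₁, v₂ palindromes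
    (v₂ possibly empty), and u = v₂·(a·v)^t for some t ≥ 0. -/
theorem prop_form_iv (n : ℕ) (w u v : Word) (hw : InF n w)
    (hdec : w = u ++ [Letter.a] ++ v ++ [Letter.b] ++ sym u ++ [Letter.b])
    (hpp : IsPrincipalPrefix (u ++ [Letter.a]) w)
    (hv : v ≠ []) :
    ∃ v₁ v₂ : Word, ∃ t : ℕ,
      v = v₁ ++ [Letter.a] ++ v₂ ∧ Palindrome v₁ ∧ Palindrome v₂ ∧
      u = v₂ ++ wpow ([Letter.a] ++ v) t := by
  obtain ⟨hu, hconj⟩ := palindrome_and_conj_of_gammaRel_self hw.2 hdec hpp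
  obtain ⟨p, q, t, hq, hpq, hqp, rfl⟩ := exists_conj_factorization (by simp) hconj
  have hp : Palindrome p := hu.of_append_wpow
  have hq_pal : Palindrome q := by
    refine palindrome_of_comp_append_eq (Q := [Letter.b] ++ p) (by simp) ?_
    rw [List.append_assoc, comp_append, ← hpq, List.reverse_append, hp, ← List.append_assoc,
      ← hqp]
    simp
  obtain ⟨c, q', rfl⟩ := List.exists_cons_of_ne_nil hq
  obtain ⟨rfl, rfl⟩ : Letter.a = c ∧ v = q' ++ p := by simpa using hqp
  have hq' : q' ≠ [] := by
    rintro rfl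
    exact hv (eq_nil_of_comp_eq_self (by simpa using hpq))
  obtain ⟨m, hm, rfl⟩ := hq_pal.exists_eq_cons_append hq'
  exact ⟨m, p, t, by simp, hm, hp, by rw [hqp]⟩
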